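/- arXiv:2402.06779 — 2 statements merged into one kernel-verified Lean document; each statement's English description precedes it below -/
import Mathlib

section
/- The 4×4 Jacobian determinant of the first patch at the disease-free equilibrium factors as the product of a quadratic and two linear factors: det(J₁ − λI) = [(prA/k + α + μ_S + λ)(μ_S + λ) − 2αprA/k]·(μ_I + λ)·(λ − (β₁ − μ_I)) up to sign, where N₁ = J_S + A, where the matrix has rows: (−prA/k − (α+μ_S) − λ, −prA/k − β₁J_S/N₁, −2prA/k, −prA/k − β₁J_S/N₁), (0, β₁J_S/N₁ − μ_I − λ, 0, β₁J_S/N₁), (α, −β₁A/N₁, −μ_S − λ, −β₁A/N₁), (0, β₁A/N₁, 0, β₁A/N₁ − μ_I − λ). -/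
/-!
In the order (S-rows 0, 2; I-rows 1, 3) the matrix is block upper triangular, so its determinant is
the product of the two 2×2 diagonal block determinants. The infected block is
`[[a - m, a], [b, b - m]]` with `m = μ_I + λ` and `a + b = β₁ (J_S + A) / N₁ = β₁`, whose
determinant is `m² - β₁ m`.
-/

open Matrix

def finFourEvenOddEquiv : Fin 2 ⊕ Fin 2 ≃ Fin 4 where
  toFun := Sum.elim ![0, 2] ![1, 3]
  invFun := ![.inl 0, .inr 0, .inl 1, .inr 1]
  left_inv := by decide
  right_inv := by decide

theorem Matrix.det_fin_four_of_block_triangular {R : Type*} [CommRing R]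
    (M : Matrix (Fin 4) (Fin 4) R)
    (h10 : M 1 0 = 0) (h12 : M 1 2 = 0) (h30 : M 3 0 = 0) (h32 : M 3 2 = 0) :
    M.det = (M 0 0 * M 2 2 - M 0 2 * M 2 0) * (M 1 1 * M 3 3 - M 1 3 * M 3 1) := by
  have hblocks : M.submatrix finFourEvenOddEquiv finFourEvenOddEquiv =
      fromBlocks !![M 0 0, M 0 2; M 2 0, M 2 2] !![M 0 1, M 0 3; M 2 1, M 2 3] 0
        !![M 1 1, M 1 3; M 3 1, M 3 3] := by
    ext (i | i) (j | j) <;> fin_cases i <;> fin_cases j <;>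
      simp [finFourEvenOddEquiv, h10, h12, h30, h32]
  rw [← det_submatrix_equiv_self finFourEvenOddEquiv, hblocks, det_fromBlocks_zero₂₁,
    det_fin_two_of, det_fin_two_of]

theorem first_patch_dfe_jacobian_det_factors_general
    (p r k α μS μI β₁ JS A lam : ℝ)
    (N₁ : ℝ) (hN : N₁ = JS + A) (hNpos : 0 < N₁) :
    (Matrix.of
      ![![-(p*r*A/k) - (α + μS) - lam, -(p*r*A/k) - β₁*JS/N₁, -(2*p*r*A/k), -(p*r*A/k) - β₁*JS/N₁],
        ![0, β₁*JS/N₁ - μI - lam, 0, β₁*JS/N₁],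
        ![α, -(β₁*A/N₁), -μS - lam, -(β₁*A/N₁)],
        ![0, β₁*A/N₁, 0, β₁*A/N₁ - μI - lam]] : Matrix (Fin 4) (Fin 4) ℝ).det
    = (-((-(p*r*A/k) - (α + μS) - lam) * (μS + lam)) + α * (2*p*r*A/k))
      * (-(β₁ * (μI + lam)) + (μI + lam) ^ 2) := by
  have hsplit : β₁ * JS / N₁ + β₁ * A / N₁ = β₁ := by
    rw [← add_div, ← mul_add, ← hN, mul_div_cancel_right₀ _ hNpos.ne']
  rw [det_fin_four_of_block_triangular _ rfl rfl rfl rfl]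
  simp only [of_apply, cons_val, cons_val_zero, cons_val_one]
  linear_combination
    (-((-(p*r*A/k) - (α + μS) - lam) * (μS + lam)) + α * (2*p*r*A/k)) * (-(μI + lam)) * hsplit

theorem first_patch_dfe_jacobian_det_factors
    (p r k α μS μI β₁ JS A lam : ℝ)
    (hp : 0 < p) (hr : 0 < r) (hk : 0 < k) (hα : 0 < α) (hμS : 0 < μS)
    (hμI : 0 < μI) (hβ : 0 < β₁) (hJS : 0 ≤ JS) (hA : 0 ≤ A)
    (N₁ : ℝ) (hN : N₁ = JS + A) (hNpos : 0 < N₁) :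
    (Matrix.of
      ![![-(p*r*A/k) - (α + μS) - lam, -(p*r*A/k) - β₁*JS/N₁, -(2*p*r*A/k), -(p*r*A/k) - β₁*JS/N₁],
        ![0, β₁*JS/N₁ - μI - lam, 0, β₁*JS/N₁],
        ![α, -(β₁*A/N₁), -μS - lam, -(β₁*A/N₁)],
        ![0, β₁*A/N₁, 0, β₁*A/N₁ - μI - lam]] : Matrix (Fin 4) (Fin 4) ℝ).det
    = (-((-(p*r*A/k) - (α + μS) - lam) * (μS + lam)) + α * (2*p*r*A/k))
      * (-(β₁ * (μI + lam)) + (μI + lam) ^ 2) :=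
  first_patch_dfe_jacobian_det_factors_general p r k α μS μI β₁ JS A lam N₁ hN hNpos
end

section
/- The endemic equilibrium infected level of the first patch equals I₁* = (k(R₀,₁ − 1)/(r R_p R_α R₀,₁))·(r R_p R_α − (R₀,₁ + R_s + R_α − 1)(R₀,₁ + R_s − 1)), derived from the relation 0 = prλ₁(1 − R₀,₁ I₁/(k(R₀,₁−1)))·R₀,₁/(R₀,₁−1) − μ_I R₀,₁ − R₀,₁(α+μ_S)/(R₀,₁−1) with λ₁ = R_α/(R₀,₁ + R_s − 1). -/
theorem zero_eq_mul_one_sub_mul_sub_iff_eq_div {K : Type*} [Field K] {a b c x : K}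
    (ha : a ≠ 0) (hb : b ≠ 0) : 0 = a * (1 - b * x) - c ↔ x = (a - c) / (a * b) := by
  rw [eq_div_iff (mul_ne_zero ha hb)]
  constructor <;> intro h <;> linear_combination h

theorem endemic_I1_star_formula_general (r k p α μS μI R₀ Rp Rα Rs lam1 : ℝ)
    (hr : 0 < r) (hk : 0 < k) (hp : 0 < p) (hα : 0 < α) (hμI : 0 < μI)
    (hR₀ : 1 < R₀) (hRp : Rp = p / μI) (hRα : Rα = α / μI) (hRs : Rs = μS / μI)
    (hden : 0 < R₀ + Rs - 1) (hlam : lam1 = Rα / (R₀ + Rs - 1)) :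
    ∀ I₁ : ℝ,
      (0 = p * r * lam1 * (1 - (R₀ / (k * (R₀ - 1))) * I₁) * (R₀ / (R₀ - 1))
            - μI * R₀ - R₀ * (α + μS) / (R₀ - 1))
      ↔ I₁ = (k * (R₀ - 1) / (r * Rp * Rα * R₀))
              * (r * Rp * Rα - (R₀ + Rs + Rα - 1) * (R₀ + Rs - 1)) := by
  intro I₁
  have hR₀' : 0 < R₀ - 1 := sub_pos.2 hR₀
  have hRp' : 0 < Rp := hRp ▸ div_pos hp hμI
  have hRα' : 0 < Rα := hRα ▸ div_pos hα hμI
  obtain rfl : p = Rp * μI := by rw [hRp, div_mul_cancel₀ _ hμI.ne']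
  obtain rfl : α = Rα * μI := by rw [hRα, div_mul_cancel₀ _ hμI.ne']
  obtain rfl : μS = Rs * μI := by rw [hRs, div_mul_cancel₀ _ hμI.ne']
  subst hlam
  rw [show Rp * μI * r * (Rα / (R₀ + Rs - 1)) * (1 - R₀ / (k * (R₀ - 1)) * I₁) * (R₀ / (R₀ - 1))
        - μI * R₀ - R₀ * (Rα * μI + Rs * μI) / (R₀ - 1)
      = (Rp * μI * r * (Rα / (R₀ + Rs - 1)) * (R₀ / (R₀ - 1))) * (1 - R₀ / (k * (R₀ - 1)) * I₁)
        - (μI * R₀ + R₀ * (Rα * μI + Rs * μI) / (R₀ - 1)) by ring,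
    zero_eq_mul_one_sub_mul_sub_iff_eq_div (by positivity) (by positivity)]
  congr! 1
  field_simp
  ring

theorem endemic_I1_star_formula (r k p α μS μI R₀ Rp Rα Rs lam1 : ℝ)
    (hr : 0 < r) (hk : 0 < k) (hp : 0 < p) (hα : 0 < α) (hμS : 0 < μS) (hμI : 0 < μI)
    (hR₀ : 1 < R₀) (hRp : Rp = p / μI) (hRα : Rα = α / μI) (hRs : Rs = μS / μI)
    (hden : 0 < R₀ + Rs - 1) (hlam : lam1 = Rα / (R₀ + Rs - 1)) :
    ∀ I₁ : ℝ,
      (0 = p * r * lam1 * (1 - (R₀ / (k * (R₀ - 1))) * I₁) * (R₀ / (R₀ - 1))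
            - μI * R₀ - R₀ * (α + μS) / (R₀ - 1))
      ↔ I₁ = (k * (R₀ - 1) / (r * Rp * Rα * R₀))
              * (r * Rp * Rα - (R₀ + Rs + Rα - 1) * (R₀ + Rs - 1)) :=
  endemic_I1_star_formula_general r k p α μS μI R₀ Rp Rα Rs lam1 hr hk hp hα hμI hR₀ hRp hRα hRs
    hden hlam
end
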